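/- In the automaton group of automaton 920, the element b has infinite order: since a^{-1}|_1 = b^{-1}|_1 = b^{-1} and b^{-1}(1) = 1, every b^{-n}(01^∞) is left-shift equivalent to 1^∞, while b(01^∞) = 0^∞, which is not shift-equivalent to 1^∞. -/

import Mathlib

namespace Stmt15


/-- A Mealy automaton over the binary alphabet with state set `S`. -/
structure Mealy (S : Type) where
  /-- transition function -/
  δ : S → Bool → S
  /-- output function -/
  τ : S → Bool → Bool

namespace Mealy

variable {S : Type} (M : Mealy S)

/-- The state reached from `q` after reading the first `n` letters of `w`. -/
def stateAt (q : S) (w : ℕ → Bool) : ℕ → S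
  | 0 => q
  | n + 1 => M.δ (stateAt q w n) (w n)

/-- The action of state `q` on infinite words. -/
def act (q : S) (w : ℕ → Bool) : ℕ → Bool :=
  fun n => M.τ (M.stateAt q w n) (w n)

/-- The inverse automaton (for automata whose output functions are involutions). -/
def inv : Mealy S := ⟨fun q b => M.δ q (M.τ q b), M.τ⟩

theorem stateAt_inv_act (h : ∀ q b, M.τ q (M.τ q b) = b) (q : S) (w : ℕ → Bool) :
    ∀ n, M.inv.stateAt q (M.act q w) n = M.stateAt q w n := by
  intro n
  induction n with
  | zero => rfl
  | succ n ih =>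
    show M.inv.δ (M.inv.stateAt q (M.act q w) n) (M.act q w n) = M.δ (M.stateAt q w n) (w n)
    rw [ih]
    show M.δ (M.stateAt q w n) (M.τ (M.stateAt q w n) (M.τ (M.stateAt q w n) (w n))) = _
    rw [h]

theorem inv_act (h : ∀ q b, M.τ q (M.τ q b) = b) (q : S) (w : ℕ → Bool) :
    M.inv.act q (M.act q w) = w := by
  funext n
  show M.inv.τ (M.inv.stateAt q (M.act q w) n) (M.act q w n) = w n
  rw [stateAt_inv_act M h]
  show M.τ (M.stateAt q w n) (M.τ (M.stateAt q w n) (w n)) = w n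
  rw [h]

theorem inv_inv (h : ∀ q b, M.τ q (M.τ q b) = b) : M.inv.inv = M := by
  obtain ⟨d, t⟩ := M
  simp only [inv]
  congr 1
  funext q b
  exact congrArg (d q) (h q b)

/-- The permutation of the set of infinite binary words defined by state `q`. -/
def perm (h : ∀ q b, M.τ q (M.τ q b) = b) (q : S) : Equiv.Perm (ℕ → Bool) where
  toFun := M.act q
  invFun := M.inv.act q
  left_inv := fun w => M.inv_act h q w
  right_inv := fun w => by
    have h2 : ∀ q b, M.inv.τ q (M.inv.τ q b) = b := h
    have := M.inv.inv_act h2 q w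
    rwa [M.inv_inv h] at this

end Mealy

/-- Prepend a finite word to an infinite word. -/
def cat (u : List Bool) (w : ℕ → Bool) : ℕ → Bool :=
  fun n => u.getD n (w (n - u.length))

/-- The (semantic) restriction of a transformation of infinite words to the
subtree indexed by the finite word `u`. -/
def resW (f : (ℕ → Bool) → ℕ → Bool) (u : List Bool) : (ℕ → Bool) → ℕ → Bool :=
  fun w n => f (cat u w) (n + u.length)

/-- The periodic infinite word with period `u`. -/
def per (u : List Bool) : ℕ → Bool := fun n => u.getD (n % u.length) false

/-- Left-shift equivalence of infinite words: they share a common infinite tail. -/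
def seq (u v : ℕ → Bool) : Prop := ∃ k l : ℕ, ∀ n, u (n + k) = v (n + l)

inductive St : Type
  | a | b | c
deriving DecidableEq

instance instFintypeSt : Fintype St := ⟨{.a, .b, .c}, fun x => by cases x <;> simp⟩

/-- Automaton 920. -/
def M : Mealy St where
  δ := fun q x => match q, x with
    | .a, false => .b | .a, true => .a
    | .b, false => .a | .b, true => .b
    | .c, false => .c | .c, true => .a
  τ := fun q x => match q with
    | .a => !x
    | .b => x
    | .c => x

theorem M_inv : ∀ q x, M.τ q (M.τ q x) = x := by decide

/-- The automorphism of the binary tree boundary defined by state `a`. -/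
def a : Equiv.Perm (ℕ → Bool) := M.perm M_inv .a

/-- The automorphism of the binary tree boundary defined by state `b`. -/
def b : Equiv.Perm (ℕ → Bool) := M.perm M_inv .b

/-- The automorphism of the binary tree boundary defined by state `c`. -/
def c : Equiv.Perm (ℕ → Bool) := M.perm M_inv .c

open Filter

namespace Mealy

variable {S : Type} (M : Mealy S)

lemma stateAt_succ (q : S) (w : ℕ → Bool) (n : ℕ) :
    M.stateAt q w (n + 1) = M.δ (M.stateAt q w n) (w n) := rfl

lemma stateAt_cat_singleton_succ (q : S) (x : Bool) (w : ℕ → Bool) (n : ℕ) :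
    M.stateAt q (cat [x] w) (n + 1) = M.stateAt (M.δ q x) w n := by
  induction n with
  | zero => rfl
  | succ n ih => rw [stateAt_succ, ih]; rfl

lemma act_cat_singleton (q : S) (x : Bool) (w : ℕ → Bool) :
    M.act q (cat [x] w) = cat [M.τ q x] (M.act (M.δ q x) w) := by
  funext n
  cases n with
  | zero => rfl
  | succ n => simp only [act, stateAt_cat_singleton_succ]; rfl

lemma resW_act_singleton (q : S) (x : Bool) : resW (M.act q) [x] = M.act (M.δ q x) := by
  funext w n
  exact congrFun (M.act_cat_singleton q x w) (n + 1)

lemma act_const {q : S} {x y : Bool} (hδ : M.δ q x = q) (hτ : M.τ q x = y) :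
    M.act q (fun _ => x) = fun _ => y := by
  have hstate : ∀ n, M.stateAt q (fun _ => x) n = q := by
    intro n
    induction n with
    | zero => rfl
    | succ n ih => rw [stateAt_succ, ih, hδ]
  funext n
  simp only [act, hstate, hτ]

lemma eventually_stateAt_eq {x : Bool} {s : S} (hsync : ∀ q, M.δ (M.δ q x) x = s)
    (q : S) {w : ℕ → Bool} (hw : ∀ᶠ n in atTop, w n = x) :
    ∀ᶠ n in atTop, M.stateAt q w n = s := by
  obtain ⟨k, hk⟩ := eventually_atTop.1 hw
  refine eventually_atTop.2 ⟨k + 2, fun n hn => ?_⟩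
  obtain ⟨m, rfl⟩ : ∃ m, n = m + 2 := ⟨n - 2, by omega⟩
  rw [stateAt_succ, stateAt_succ, hk m (by omega), hk (m + 1) (by omega), hsync]

lemma eventually_act_eq {x : Bool} {s : S} (hsync : ∀ q, M.δ (M.δ q x) x = s)
    (hτ : M.τ s x = x) (q : S) {w : ℕ → Bool} (hw : ∀ᶠ n in atTop, w n = x) :
    ∀ᶠ n in atTop, M.act q w n = x := by
  filter_upwards [M.eventually_stateAt_eq hsync q hw, hw] with n hstate hwn
  simp only [act, hstate, hwn, hτ]

end Mealy

lemma cat_singleton_const (x : Bool) : cat [x] (fun _ => x) = fun _ => x := by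
  funext n
  cases n <;> rfl

lemma eventually_cat_singleton_eq {x y : Bool} {w : ℕ → Bool}
    (hw : ∀ᶠ n in atTop, w n = y) : ∀ᶠ n in atTop, cat [x] w n = y := by
  filter_upwards [(tendsto_sub_atTop_nat 1).eventually hw, eventually_ge_atTop 1] with n hwn hn
  obtain ⟨m, rfl⟩ := Nat.exists_eq_add_of_le' hn
  exact hwn

lemma seq_const_iff (u : ℕ → Bool) (x : Bool) : seq u (fun _ => x) ↔ ∀ᶠ n in atTop, u n = x := by
  constructor
  · rintro ⟨k, l, h⟩
    exact eventually_atTop.2 ⟨k, fun n hn => by simpa [Nat.sub_add_cancel hn] using h (n - k)⟩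
  · intro h
    obtain ⟨k, hk⟩ := eventually_atTop.1 h
    exact ⟨k, 0, fun n => hk (n + k) (Nat.le_add_left k n)⟩

lemma seq_const_const_iff (x y : Bool) : seq (fun _ => x) (fun _ => y) ↔ x = y := by
  rw [seq_const_iff]
  exact eventually_const

lemma inv_pow_eq_of_pow_succ_eq_one {G : Type*} [Group G] {g : G} {m : ℕ} (h : g ^ (m + 1) = 1) :
    g⁻¹ ^ m = g := by
  rw [inv_pow]
  exact inv_eq_of_mul_eq_one_left (by rwa [← pow_succ'])

lemma b_apply_cat_false_const_true : b (cat [false] (fun _ => true)) = fun _ => false := by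
  change M.act .b (cat [false] _) = _
  rw [M.act_cat_singleton]
  change cat [false] (M.act .a fun _ => true) = _
  rw [M.act_const rfl rfl]
  exact cat_singleton_const false

lemma eventually_inv_b_pow_apply_cat_false_const_true (n : ℕ) :
    ∀ᶠ k in atTop, (b⁻¹ ^ n) (cat [false] (fun _ => true)) k = true := by
  induction n with
  | zero => exact eventually_cat_singleton_eq (Eventually.of_forall fun _ => rfl)
  | succ n ih =>
    rw [pow_succ', Equiv.Perm.mul_apply]
    -- in the inverse automaton, reading `11` from any state leads to `b`, which fixes `1`
    exact M.inv.eventually_act_eq (s := .b) (by decide) rfl .b ih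

/-- In the automaton group of automaton 920, the element `b` has infinite order:
`a⁻¹|₁ = b⁻¹|₁ = b⁻¹` and `b⁻¹(1) = 1`, so every `b⁻ⁿ(01^∞)` is left-shift equivalent
to `1^∞`, while `b(01^∞) = 0^∞`, which is not shift-equivalent to `1^∞`. -/
theorem automaton920_b_infinite_order :
    (resW ⇑a⁻¹ [true] = ⇑b⁻¹) ∧
    (∀ w : ℕ → Bool, ⇑b⁻¹ (cat [true] w) = cat [true] (⇑b⁻¹ w)) ∧
    (∀ n : ℕ, seq (⇑(b⁻¹ ^ n) (cat [false] (fun _ => true))) (fun _ => true)) ∧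
    (b (cat [false] (fun _ => true)) = (fun _ => false)) ∧
    ¬ seq (fun _ => false) (fun _ => true) ∧
    (∀ n : ℕ, 1 ≤ n → b ^ n ≠ 1) := by
  have hseq (n : ℕ) : seq (⇑(b⁻¹ ^ n) (cat [false] (fun _ => true))) (fun _ => true) :=
    (seq_const_iff _ _).2 (eventually_inv_b_pow_apply_cat_false_const_true n)
  have hnseq : ¬ seq (fun _ => false) (fun _ => true) := by simp [seq_const_const_iff]
  refine ⟨M.inv.resW_act_singleton .a true, M.inv.act_cat_singleton .b true, hseq,
    b_apply_cat_false_const_true, hnseq, fun n hn hb => hnseq ?_⟩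
  obtain ⟨m, rfl⟩ := Nat.exists_eq_add_of_le' hn
  rw [← b_apply_cat_false_const_true, ← inv_pow_eq_of_pow_succ_eq_one hb]
  exact hseq m

end Stmt15
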